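/- Time-integral bound for the heat-regularized cutoff kernels (Lemma 5.2): There exists a constant C > 0 such that for every k_F ∈ (0,1], every L ≥ 1/k_F, and all functions w, η : Λ*_L → [0,1] with w(k) = 0 unless k_F + k_F^{3/2} ≤ |k| ≤ 3 k_F and η(k) = 0 unless |k| ≤ k_F − k_F^{3/2}, one has ∫₀^∞ [ (1/L³) ∑_{k ∈ Λ*_L} w(k)² e^{−2t(|k|² − k_F²)} ]^{1/2} · [ (1/L³) ∑_{k ∈ Λ*_L} η(k)² e^{−2t(k_F² − |k|²)} ]^{1/2} dt ≤ C k_F^{1/2}. (With ρ := k_F³ this is the bound C ρ^{1/6} stated in the paper.) -/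

import Mathlib

/-!
All the momenta involved satisfy `|k| ≤ 3 k_F`, and there are `O((k_F L)³)` such lattice points,
so both normalized sums are `O(k_F³)`. On the support of `w` the gap
`|k|² − k_F² ≥ 2 k_F · k_F^{3/2}` makes the first one `O(k_F³ e^{−4 k_F^{5/2} t})`, while the
heat factor in the second is at most `1` on the support of `η`. The integrand is therefore
`O(k_F³ e^{−2 k_F^{5/2} t})`, whose integral over `t > 0` is `O(k_F^{1/2})`.
-/

noncomputable section

open Real MeasureTheory

abbrev E3 : Type := EuclideanSpace ℝ (Fin 3)

/-- The momentum lattice point `(2π/L)·n` of `Λ*_L`, for `n ∈ ℤ³`. -/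
def momVec (L : ℝ) (n : Fin 3 → ℤ) : E3 :=
  ∑ j : Fin 3, (2 * π / L * (n j : ℝ)) • EuclideanSpace.single j (1 : ℝ)

/-- The Euclidean norm `|k|` of the lattice point `(2π/L)·n`. -/
def knorm (L : ℝ) (n : Fin 3 → ℤ) : ℝ := ‖momVec L n‖

open Set

lemma momVec_apply (L : ℝ) (n : Fin 3 → ℤ) (j : Fin 3) :
    momVec L n j = 2 * π / L * n j := by
  simp [momVec, Pi.single_apply]

lemma mul_abs_le_knorm {L : ℝ} (hL : 0 < L) (n : Fin 3 → ℤ) (j : Fin 3) :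
    2 * π / L * |(n j : ℝ)| ≤ knorm L n := by
  have h := PiLp.norm_apply_le (momVec L n) j
  rwa [momVec_apply, Real.norm_eq_abs, abs_mul, abs_of_pos (by positivity : 0 < 2 * π / L)] at h

def latticeBox (N : ℕ) : Finset (Fin 3 → ℤ) :=
  Fintype.piFinset fun _ => Finset.Icc (-(N : ℤ)) N

lemma card_latticeBox (N : ℕ) : (latticeBox N).card = (2 * N + 1) ^ 3 := by
  rw [latticeBox, Fintype.card_piFinset, Finset.prod_const, Finset.card_univ, Fintype.card_fin,
    Int.card_Icc]
  congr 1
  omega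

lemma mem_latticeBox_of_knorm_le {L R : ℝ} {N : ℕ} {n : Fin 3 → ℤ} (hL : 0 < L)
    (hN : L * R ≤ 2 * π * N) (hn : knorm L n ≤ R) : n ∈ latticeBox N := by
  rw [latticeBox, Fintype.mem_piFinset]
  intro j
  have hcoord : 2 * π * |(n j : ℝ)| ≤ 2 * π * N := by
    calc 2 * π * |(n j : ℝ)| = L * (2 * π / L * |(n j : ℝ)|) := by field_simp
      _ ≤ L * R := mul_le_mul_of_nonneg_left ((mul_abs_le_knorm hL n j).trans hn) hL.le
      _ ≤ 2 * π * N := hN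
  have habs : |n j| ≤ (N : ℤ) := by
    exact_mod_cast le_of_mul_le_mul_left hcoord (by positivity)
  exact Finset.mem_Icc.mpr (abs_le.mp habs)

lemma card_latticeBox_ceil_le {x : ℝ} (hx : 1 ≤ x) :
    ((latticeBox ⌈x⌉₊).card : ℝ) ≤ 125 * x ^ 3 := by
  have hceil : (⌈x⌉₊ : ℝ) < x + 1 := Nat.ceil_lt_add_one (by linarith)
  rw [card_latticeBox]
  push_cast
  calc (2 * (⌈x⌉₊ : ℝ) + 1) ^ 3 ≤ (5 * x) ^ 3 := by gcongr; linarith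
    _ = 125 * x ^ 3 := by ring

lemma tsum_le_card_mul_of_support_subset {ι : Type*} {f : ι → ℝ} {c : ℝ} (s : Finset ι)
    (hs : ∀ i ∉ s, f i = 0) (hc : ∀ i ∈ s, f i ≤ c) : ∑' i, f i ≤ s.card * c := by
  rw [tsum_eq_sum hs, ← nsmul_eq_mul]
  exact Finset.sum_le_card_nsmul s f c hc

lemma lattice_average_le {kF L c : ℝ} {f : (Fin 3 → ℤ) → ℝ} (hkF : 0 < kF) (hkFL : 1 ≤ kF * L)
    (hc : 0 ≤ c) (hsupp : ∀ n, 3 * kF < knorm L n → f n = 0) (hf : ∀ n, f n ≤ c) :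
    1 / L ^ 3 * ∑' n, f n ≤ 125 * kF ^ 3 * c := by
  have hL : 0 < L := pos_of_mul_pos_right (by linarith) hkF.le
  have hN : L * (3 * kF) ≤ 2 * π * ⌈kF * L⌉₊ := by
    have := Nat.le_ceil (kF * L)
    nlinarith [pi_gt_three]
  have hsum := tsum_le_card_mul_of_support_subset (latticeBox ⌈kF * L⌉₊)
    (fun n hn => hsupp n (not_le.mp fun h => hn (mem_latticeBox_of_knorm_le hL hN h)))
    (fun n _ => hf n)
  calc 1 / L ^ 3 * ∑' n, f n ≤ 1 / L ^ 3 * (125 * (kF * L) ^ 3 * c) := by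
        gcongr
        exact hsum.trans (mul_le_mul_of_nonneg_right (card_latticeBox_ceil_le hkFL) hc)
    _ = 125 * kF ^ 3 * c := by field_simp

lemma sq_mul_le_of_mem_Icc {a e c : ℝ} (ha : a ∈ Icc (0 : ℝ) 1) (he : 0 ≤ e) (hc : 0 ≤ c)
    (h : a ≠ 0 → e ≤ c) : a ^ 2 * e ≤ c := by
  rcases eq_or_ne a 0 with rfl | ha0
  · simpa using hc
  · have : a ^ 2 ≤ 1 := pow_le_one₀ ha.1 ha.2
    nlinarith [h ha0]

lemma outer_shell_average_le {kF L ε t : ℝ} {w : (Fin 3 → ℤ) → ℝ} (hkF : 0 < kF)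
    (hkFL : 1 ≤ kF * L) (hε : 0 ≤ ε) (ht : 0 ≤ t) (hw : ∀ n, w n ∈ Icc (0 : ℝ) 1)
    (hwsupp : ∀ n, ¬(kF + ε ≤ knorm L n ∧ knorm L n ≤ 3 * kF) → w n = 0) :
    1 / L ^ 3 * ∑' n, w n ^ 2 * exp (-2 * t * (knorm L n ^ 2 - kF ^ 2))
      ≤ 125 * kF ^ 3 * exp (-(2 * kF * ε) * t) ^ 2 := by
  refine lattice_average_le hkF hkFL (by positivity) (fun n hn => ?_) (fun n => ?_)
  · rw [hwsupp n fun h => hn.not_ge h.2]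
    ring
  · refine sq_mul_le_of_mem_Icc (hw n) (exp_pos _).le (by positivity) fun hn => ?_
    have hk := (not_imp_comm.mp (hwsupp n) hn).1
    have hgap : 2 * kF * ε ≤ knorm L n ^ 2 - kF ^ 2 := by nlinarith
    rw [← exp_nat_mul, exp_le_exp]
    push_cast
    nlinarith [mul_le_mul_of_nonneg_left hgap ht]

lemma inner_ball_average_le {kF L ε t : ℝ} {η : (Fin 3 → ℤ) → ℝ} (hkF : 0 < kF)
    (hkFL : 1 ≤ kF * L) (hε : 0 ≤ ε) (ht : 0 ≤ t) (hη : ∀ n, η n ∈ Icc (0 : ℝ) 1)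
    (hηsupp : ∀ n, ¬(knorm L n ≤ kF - ε) → η n = 0) :
    1 / L ^ 3 * ∑' n, η n ^ 2 * exp (-2 * t * (kF ^ 2 - knorm L n ^ 2)) ≤ 125 * kF ^ 3 := by
  refine (lattice_average_le hkF hkFL zero_le_one (fun n hn => ?_) (fun n => ?_)).trans_eq
    (mul_one _)
  · rw [hηsupp n (by linarith)]
    ring
  · refine sq_mul_le_of_mem_Icc (hη n) (exp_pos _).le zero_le_one fun hn => ?_
    have hk := not_imp_comm.mp (hηsupp n) hn
    have hk0 : 0 ≤ knorm L n := norm_nonneg _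
    rw [exp_le_one_iff]
    nlinarith [mul_nonneg ht (by nlinarith : 0 ≤ kF ^ 2 - knorm L n ^ 2)]

lemma sqrt_mul_sqrt_le {x y P s : ℝ} (hP : 0 ≤ P) (hs : 0 ≤ s) (hx : x ≤ P * s ^ 2)
    (hy : y ≤ P) : √x * √y ≤ P * s :=
  calc √x * √y ≤ √(P * s ^ 2) * √P := by gcongr
    _ = P * s := by rw [sqrt_mul hP, sqrt_sq hs, mul_right_comm, mul_self_sqrt hP]

lemma setLIntegral_Ioi_ofReal_mul_exp_neg {P a : ℝ} (hP : 0 ≤ P) (ha : 0 < a) :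
    ∫⁻ t in Ioi 0, ENNReal.ofReal (P * exp (-a * t)) = ENNReal.ofReal (P / a) := by
  rw [← ofReal_integral_eq_lintegral_ofReal
      ((integrableOn_exp_mul_Ioi (neg_neg_of_pos ha) 0).const_mul P)
      (Filter.Eventually.of_forall fun t => by positivity),
    integral_const_mul, integral_exp_mul_Ioi (neg_neg_of_pos ha) 0]
  simp [div_eq_mul_inv]

theorem time_integral_heat_kernel_bound :
    ∃ C : ℝ, 0 < C ∧
      ∀ kF : ℝ, kF ∈ Set.Ioc (0 : ℝ) 1 → ∀ L : ℝ, 1 / kF ≤ L →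
        ∀ w η : (Fin 3 → ℤ) → ℝ,
          (∀ n, w n ∈ Set.Icc (0 : ℝ) 1) →
          (∀ n, η n ∈ Set.Icc (0 : ℝ) 1) →
          (∀ n, ¬(kF + kF ^ ((3 : ℝ) / 2) ≤ knorm L n ∧ knorm L n ≤ 3 * kF) → w n = 0) →
          (∀ n, ¬(knorm L n ≤ kF - kF ^ ((3 : ℝ) / 2)) → η n = 0) →
          (∫⁻ t in Set.Ioi (0 : ℝ),
              ENNReal.ofReal
                (Real.sqrt ((1 / L ^ 3) *
                    ∑' n : Fin 3 → ℤ, w n ^ 2 * Real.exp (-2 * t * (knorm L n ^ 2 - kF ^ 2))) *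
                  Real.sqrt ((1 / L ^ 3) *
                    ∑' n : Fin 3 → ℤ, η n ^ 2 * Real.exp (-2 * t * (kF ^ 2 - knorm L n ^ 2)))))
            ≤ ENNReal.ofReal (C * kF ^ ((1 : ℝ) / 2)) := by
  refine ⟨125 / 2, by norm_num, ?_⟩
  rintro kF ⟨hkF, -⟩ L hL w η hw hη hwsupp hηsupp
  have hkFL : 1 ≤ kF * L := by rwa [div_le_iff₀ hkF, mul_comm] at hL
  set ε := kF ^ ((3 : ℝ) / 2)
  have hε : 0 < ε := by positivity
  have hpow : kF ^ 3 = kF * ε * kF ^ ((1 : ℝ) / 2) := by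
    rw [mul_assoc, ← rpow_add hkF, ← rpow_one_add' hkF.le (by norm_num)]
    norm_num
  calc _ ≤ ∫⁻ t in Ioi 0, ENNReal.ofReal (125 * kF ^ 3 * exp (-(2 * kF * ε) * t)) :=
        setLIntegral_mono (by fun_prop) fun t ht => ENNReal.ofReal_le_ofReal <|
          sqrt_mul_sqrt_le (by positivity) (exp_pos _).le
            (outer_shell_average_le hkF hkFL hε.le (le_of_lt ht) hw hwsupp)
            (inner_ball_average_le hkF hkFL hε.le (le_of_lt ht) hη hηsupp)
    _ = ENNReal.ofReal (125 * kF ^ 3 / (2 * kF * ε)) :=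
        setLIntegral_Ioi_ofReal_mul_exp_neg (by positivity) (by positivity)
    _ = ENNReal.ofReal (125 / 2 * kF ^ ((1 : ℝ) / 2)) := by
        rw [hpow]
        field_simp
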